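/- arXiv:2602.12900 — 2 statements merged into one kernel-verified Lean document; each statement's English description precedes it below -/
import Mathlib

section
/- Let X_1, …, X_n (n ≥ 1) be independent and identically distributed random variables taking values in (0,∞) with common continuous distribution function F. Then the minimum X_{(1)} = min(X_1,…,X_n) and the reciprocal of the maximum, 1/X_{(n)} = 1/max(X_1,…,X_n), are identically distributed (i.e., their laws coincide) if and only if F is log-symmetric, that is, F(x) = 1 − F(1/x) for all x > 0. -/
open MeasureTheory ProbabilityTheory Set Filter Topology

/-- For i.i.d. positive random variables `X_1, …, X_n` (`n ≥ 1`) with common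
continuous distribution function `F`, the minimum `X_(1)` and the reciprocal of the maximum
`1 / X_(n)` are identically distributed iff `F` is log-symmetric. -/
theorem min_recipMax_identDistrib_iff_logSymmetric
    {Ω : Type*} [MeasurableSpace Ω] (μ : Measure Ω) [IsProbabilityMeasure μ]
    (n : ℕ) (hn : 1 ≤ n) (X : Fin n → Ω → ℝ)
    (hmeas : ∀ j, Measurable (X j))
    (hpos : ∀ j ω, 0 < X j ω)
    (hindep : iIndepFun X μ)
    (hid : ∀ j, Measure.map (X j) μ = Measure.map (X ⟨0, hn⟩) μ)
    (F : ℝ → ℝ)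
    (hF : ∀ x, F x = (μ {ω | X ⟨0, hn⟩ ω ≤ x}).toReal)
    (hFcont : Continuous F) :
    Measure.map (fun ω => ⨅ j, X j ω) μ = Measure.map (fun ω => (⨆ j, X j ω)⁻¹) μ
      ↔ ∀ x > 0, F x = 1 - F x⁻¹ := by
  haveI : Nonempty (Fin n) := ⟨⟨0, hn⟩⟩
  set ν : Measure ℝ := Measure.map (X ⟨0, hn⟩) μ with hνdef
  haveI hνprob : IsProbabilityMeasure ν := Measure.isProbabilityMeasure_map (hmeas _).aemeasurable
  -- F in terms of ν
  have hFν : ∀ x, F x = (ν (Iic x)).toReal := by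
    intro x
    rw [hF x, hνdef, Measure.map_apply (hmeas _) measurableSet_Iic]
    rfl
  -- measurability
  have hmin : Measurable fun ω => ⨅ j, X j ω := Measurable.iInf hmeas
  have hsup : Measurable fun ω => ⨆ j, X j ω := Measurable.iSup hmeas
  have hinv : Measurable fun ω => (⨆ j, X j ω)⁻¹ := hsup.inv
  -- no atoms : left limits equal values
  have hatom : ∀ t : ℝ, ν (Iio t) = ν (Iic t) := by
    intro t
    have hmono : Monotone fun k : ℕ => Iic (t - 1 / (k + 1) : ℝ) := by
      intro a b hab
      apply Iic_subset_Iic.2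
      have hba : (a : ℝ) + 1 ≤ (b : ℝ) + 1 := by exact_mod_cast by omega
      have : (1 : ℝ) / (b + 1) ≤ 1 / (a + 1) :=
        one_div_le_one_div_of_le (by positivity) hba
      linarith
    have hun : Iio t = ⋃ k : ℕ, Iic (t - 1 / (k + 1) : ℝ) := by
      ext x
      simp only [mem_Iio, mem_iUnion, mem_Iic]
      constructor
      · intro hx
        obtain ⟨k, hk⟩ := exists_nat_one_div_lt (sub_pos.2 hx)
        exact ⟨k, by linarith⟩
      · rintro ⟨k, hk⟩
        have : (0:ℝ) < 1 / (k+1) := by positivity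
        linarith
    have h1 : Tendsto (fun k : ℕ => ν (Iic (t - 1 / (k + 1) : ℝ))) atTop (𝓝 (ν (Iio t))) := by
      rw [hun]; exact tendsto_measure_iUnion_atTop hmono
    have h2 : Tendsto (fun k : ℕ => F (t - 1 / (k + 1))) atTop (𝓝 (F t)) := by
      apply (hFcont.tendsto t).comp
      have h0 : Tendsto (fun k : ℕ => t - 1/(k+1 : ℝ)) atTop (𝓝 (t - 0)) :=
        tendsto_const_nhds.sub tendsto_one_div_add_atTop_nhds_zero_nat
      simpa using h0
    have h3 : Tendsto (fun k : ℕ => F (t - 1 / (k + 1))) atTop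
        (𝓝 ((ν (Iio t)).toReal)) := by
      have := (ENNReal.tendsto_toReal (measure_ne_top ν _)).comp h1
      simpa only [Function.comp_def, ← hFν] using this
    have h4 : (ν (Iic t)).toReal = (ν (Iio t)).toReal := by
      have := tendsto_nhds_unique h2 h3
      rw [hFν] at this; exact this
    exact ((ENNReal.toReal_eq_toReal_iff' (measure_ne_top _ _) (measure_ne_top _ _)).1 h4).symm
  -- independence: intersection of identical events
  have key : ∀ s : Set ℝ, MeasurableSet s → μ (⋂ j, X j ⁻¹' s) = ν s ^ n := by
    intro s hs
    have h := hindep.measure_inter_preimage_eq_mul (S := Finset.univ)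
      (sets := fun _ => s) (fun i _ => hs)
    simp only [Finset.mem_univ, iInter_true] at h
    have hfac : ∀ i, μ (X i ⁻¹' s) = ν s := fun i => by
      rw [← Measure.map_apply (hmeas i) hs, hid i]
    calc μ (⋂ j, X j ⁻¹' s) = ∏ i : Fin n, μ (X i ⁻¹' s) := by simpa using h
    _ = ν s ^ n := by simp [hfac, Finset.prod_const]
  -- set identities
  have hIoiSet : ∀ a : ℝ, {ω | a < ⨅ j, X j ω} = ⋂ j, X j ⁻¹' Ioi a := by
    intro a
    ext ω
    simp only [mem_setOf_eq, mem_iInter, mem_preimage, mem_Ioi]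
    constructor
    · intro h j; exact h.trans_le (ciInf_le (Finite.bddBelow_range _) j)
    · intro h
      obtain ⟨j, hj⟩ := exists_eq_ciInf_of_finite (f := fun j => X j ω)
      rw [← hj]; exact h j
  have hIioSet : ∀ t : ℝ, {ω | ⨆ j, X j ω < t} = ⋂ j, X j ⁻¹' Iio t := by
    intro t
    ext ω
    simp only [mem_setOf_eq, mem_iInter, mem_preimage, mem_Iio]
    constructor
    · intro h j; exact lt_of_le_of_lt (le_ciSup (f := fun j => X j ω) (Finite.bddAbove_range _) j) h
    · intro h
      obtain ⟨j, hj⟩ := exists_eq_ciSup_of_finite (f := fun j => X j ω)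
      rw [← hj]; exact h j
  -- positivity of min and max
  have hinfpos : ∀ ω, 0 < ⨅ j, X j ω := by
    intro ω
    obtain ⟨j, hj⟩ := exists_eq_ciInf_of_finite (f := fun j => X j ω)
    rw [← hj]; exact hpos j ω
  have hsuppos : ∀ ω, 0 < ⨆ j, X j ω := fun ω =>
    lt_of_lt_of_le (hpos ⟨0, hn⟩ ω) (le_ciSup (f := fun j => X j ω) (Finite.bddAbove_range _) _)
  -- passing to complements
  have hcompl : ∀ a : ℝ, (μ {ω | ⨅ j, X j ω ≤ a} = μ {ω | (⨆ j, X j ω)⁻¹ ≤ a}) ↔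
      μ {ω | a < ⨅ j, X j ω} = μ {ω | a < (⨆ j, X j ω)⁻¹} := by
    intro a
    have m1 : MeasurableSet {ω | ⨅ j, X j ω ≤ a} := hmin measurableSet_Iic
    have m2 : MeasurableSet {ω | (⨆ j, X j ω)⁻¹ ≤ a} := hinv measurableSet_Iic
    have e1 : {ω | a < ⨅ j, X j ω} = {ω | ⨅ j, X j ω ≤ a}ᶜ := by
      ext ω; simp [not_le]
    have e2 : {ω | a < (⨆ j, X j ω)⁻¹} = {ω | (⨆ j, X j ω)⁻¹ ≤ a}ᶜ := by
      ext ω; simp [not_le]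
    rw [e1, e2, prob_compl_eq_one_sub m1, prob_compl_eq_one_sub m2]
    constructor
    · intro h; rw [h]
    · intro h
      have r1 : μ {ω | ⨅ j, X j ω ≤ a} = 1 - (1 - μ {ω | ⨅ j, X j ω ≤ a}) :=
        (ENNReal.sub_sub_cancel ENNReal.one_ne_top prob_le_one).symm
      have r2 : μ {ω | (⨆ j, X j ω)⁻¹ ≤ a} = 1 - (1 - μ {ω | (⨆ j, X j ω)⁻¹ ≤ a}) :=
        (ENNReal.sub_sub_cancel ENNReal.one_ne_top prob_le_one).symm
      rw [r1, r2, h]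
  -- computations
  have hPa : ∀ a : ℝ, μ {ω | a < ⨅ j, X j ω} = ν (Ioi a) ^ n := fun a => by
    rw [hIoiSet a, key _ measurableSet_Ioi]
  have hQa : ∀ a : ℝ, 0 < a → μ {ω | a < (⨆ j, X j ω)⁻¹} = ν (Iic a⁻¹) ^ n := by
    intro a ha
    have e : {ω | a < (⨆ j, X j ω)⁻¹} = {ω | ⨆ j, X j ω < a⁻¹} := by
      ext ω
      simp only [mem_setOf_eq]
      exact lt_inv_comm₀ ha (hsuppos ω)
    rw [e, hIioSet, key _ measurableSet_Iio, hatom]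
  have htriv : ∀ a : ℝ, a ≤ 0 →
      μ {ω | a < ⨅ j, X j ω} = μ {ω | a < (⨆ j, X j ω)⁻¹} := by
    intro a ha
    have e1 : {ω | a < ⨅ j, X j ω} = univ :=
      eq_univ_of_forall fun ω => lt_of_le_of_lt ha (hinfpos ω)
    have e2 : {ω | a < (⨆ j, X j ω)⁻¹} = univ :=
      eq_univ_of_forall fun ω => lt_of_le_of_lt ha (inv_pos.2 (hsuppos ω))
    rw [e1, e2]
  -- the condition in terms of ν
  have hcond : ∀ x : ℝ, 0 < x → (ν (Ioi x) = ν (Iic x⁻¹) ↔ F x = 1 - F x⁻¹) := by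
    intro x hx
    have hIoi : ν (Ioi x) = 1 - ν (Iic x) := by
      rw [← Set.compl_Iic, prob_compl_eq_one_sub measurableSet_Iic]
    have h1 : (ν (Ioi x)).toReal = 1 - F x := by
      rw [hIoi, ENNReal.toReal_sub_of_le prob_le_one ENNReal.one_ne_top, ENNReal.toReal_one, hFν]
    constructor
    · intro h
      have h2 := congrArg ENNReal.toReal h
      rw [h1, ← hFν] at h2
      linarith
    · intro h
      apply (ENNReal.toReal_eq_toReal_iff' (measure_ne_top _ _) (measure_ne_top _ _)).1
      rw [h1, ← hFν]
      linarith
  constructor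
  · intro hmap x hx
    have hIic : μ {ω | ⨅ j, X j ω ≤ x} = μ {ω | (⨆ j, X j ω)⁻¹ ≤ x} := by
      have h := congrArg (fun m : Measure ℝ => m (Iic x)) hmap
      rw [Measure.map_apply hmin measurableSet_Iic,
        Measure.map_apply hinv measurableSet_Iic] at h
      exact h
    have hPQ := (hcompl x).1 hIic
    rw [hPa, hQa x hx] at hPQ
    have hpow : ν (Ioi x) = ν (Iic x⁻¹) := by
      by_contra hne
      rcases lt_or_gt_of_ne hne with hlt | hlt
      · exact absurd hPQ (ne_of_lt (ENNReal.pow_lt_pow_left (by omega) hlt))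
      · exact absurd hPQ.symm (ne_of_lt (ENNReal.pow_lt_pow_left (by omega) hlt))
    exact (hcond x hx).1 hpow
  · intro h
    haveI : IsProbabilityMeasure (Measure.map (fun ω => ⨅ j, X j ω) μ) :=
      Measure.isProbabilityMeasure_map hmin.aemeasurable
    refine Measure.ext_of_Iic _ _ fun a => ?_
    rw [Measure.map_apply hmin measurableSet_Iic, Measure.map_apply hinv measurableSet_Iic]
    have goal : μ {ω | ⨅ j, X j ω ≤ a} = μ {ω | (⨆ j, X j ω)⁻¹ ≤ a} := by
      apply (hcompl a).2
      rcases le_or_gt a 0 with ha | ha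
      · exact htriv a ha
      · rw [hPa, hQa a ha, (hcond a ha).2 (h a ha)]
    exact goal
end

section
/- Let X_1, …, X_n be independent and identically distributed random variables taking values in (0,∞) with common continuous distribution function F, where n > 1. Fix i with 1 ≤ i ≤ n/2. If the i-th order statistic X_{(i)} and the reciprocal 1/X_{(n−i+1)} of the (n−i+1)-th order statistic are identically distributed, then F is log-symmetric, that is, F(x) = 1 − F(1/x) for all x > 0. -/
open MeasureTheory ProbabilityTheory

/-- The `i`-th order statistic (zero-based index `i`) of a finite tuple of reals. -/
noncomputable def orderStat {n : ℕ} (x : Fin n → ℝ) (i : Fin n) : ℝ :=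
  (List.insertionSort (· ≤ ·) (List.ofFn x))[(i : ℕ)]'
    (by rw [List.length_insertionSort, List.length_ofFn]; exact i.isLt)


open Finset
open scoped ENNReal

lemma sorted_getElem_le_iff {l : List ℝ} (hl : l.Pairwise (· ≤ ·)) {k : ℕ} (hk : k < l.length)
    (t : ℝ) : l[k] ≤ t ↔ k < l.countP (fun a => a ≤ t) := by
  constructor
  · intro h
    have hsub : (l.take (k+1)).Sublist l := List.take_sublist _ _
    have h1 : (l.take (k+1)).countP (fun a => a ≤ t) = (l.take (k+1)).length := by
      rw [List.countP_eq_length]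
      intro a ha
      obtain ⟨j, hj, rfl⟩ := List.getElem_of_mem ha
      rw [List.getElem_take]
      have hj' : j ≤ k := by
        have := hj; rw [List.length_take] at this; omega
      simp only [decide_eq_true_eq]
      exact le_trans (hl.rel_get_of_le (a := ⟨j, by omega⟩) (b := ⟨k, hk⟩) hj') h
    have h2 := hsub.countP_le (p := fun a => decide (a ≤ t))
    rw [h1] at h2
    have : (l.take (k+1)).length = k+1 := by rw [List.length_take]; omega
    omega
  · intro h
    by_contra hcon
    push_neg at hcon
    have hsplit : l.countP (fun a => a ≤ t) =
        (l.take k).countP (fun a => a ≤ t) + (l.drop k).countP (fun a => a ≤ t) := by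
      rw [← List.countP_append, List.take_append_drop]
    have hdrop : (l.drop k).countP (fun a => a ≤ t) = 0 := by
      rw [List.countP_eq_zero]
      intro a ha
      obtain ⟨j, hj, rfl⟩ := List.getElem_of_mem ha
      have hj' : k + j < l.length := by rw [List.length_drop] at hj; omega
      rw [List.getElem_drop]
      simp only [decide_eq_true_eq, not_le]
      calc t < l[k] := hcon
        _ ≤ l[k+j] := hl.rel_get_of_le (a := ⟨k, hk⟩) (b := ⟨k+j, hj'⟩) (by simp)
    have htake : (l.take k).countP (fun a => a ≤ t) ≤ k := by
      calc (l.take k).countP _ ≤ (l.take k).length := List.countP_le_length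
        _ ≤ k := by rw [List.length_take]; omega
    omega

lemma sorted_le_getElem_iff {l : List ℝ} (hl : l.Pairwise (· ≤ ·)) {k : ℕ} (hk : k < l.length)
    (t : ℝ) : t ≤ l[k] ↔ l.length - k ≤ l.countP (fun a => t ≤ a) := by
  constructor
  · intro h
    have hsub : (l.drop k).Sublist l := List.drop_sublist _ _
    have h1 : (l.drop k).countP (fun a => t ≤ a) = (l.drop k).length := by
      rw [List.countP_eq_length]
      intro a ha
      obtain ⟨j, hj, rfl⟩ := List.getElem_of_mem ha
      have hj' : k + j < l.length := by rw [List.length_drop] at hj; omega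
      rw [List.getElem_drop]
      simp only [decide_eq_true_eq]
      calc t ≤ l[k] := h
        _ ≤ l[k+j] := hl.rel_get_of_le (a := ⟨k, hk⟩) (b := ⟨k+j, hj'⟩) (by simp)
    have h2 := hsub.countP_le (p := fun a => decide (t ≤ a))
    rw [h1, List.length_drop] at h2
    omega
  · intro h
    by_contra hcon
    push_neg at hcon
    have hsplit : l.countP (fun a => t ≤ a) =
        (l.take (k+1)).countP (fun a => t ≤ a) + (l.drop (k+1)).countP (fun a => t ≤ a) := by
      rw [← List.countP_append, List.take_append_drop]
    have htake : (l.take (k+1)).countP (fun a => t ≤ a) = 0 := by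
      rw [List.countP_eq_zero]
      intro a ha
      obtain ⟨j, hj, rfl⟩ := List.getElem_of_mem ha
      rw [List.getElem_take]
      have hj' : j ≤ k := by rw [List.length_take] at hj; omega
      simp only [decide_eq_true_eq, not_le]
      calc l[j] ≤ l[k] := hl.rel_get_of_le (a := ⟨j, by omega⟩) (b := ⟨k, hk⟩) hj'
        _ < t := hcon
    have hdrop : (l.drop (k+1)).countP (fun a => t ≤ a) ≤ l.length - (k+1) := by
      calc (l.drop (k+1)).countP _ ≤ (l.drop (k+1)).length := List.countP_le_length
        _ ≤ l.length - (k+1) := by rw [List.length_drop]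
    omega

lemma countP_eq_sum_map (p : ℝ → Bool) (l : List ℝ) :
    l.countP p = (l.map (fun a => if p a then (1:ℕ) else 0)).sum := by
  induction l with
  | nil => simp
  | cons a l ih =>
    rw [List.countP_cons, List.map_cons, List.sum_cons, ih]
    by_cases h : p a <;> simp [h] <;> omega

lemma countP_ofFn {n : ℕ} (x : Fin n → ℝ) (p : ℝ → Bool) :
    (List.ofFn x).countP p = (Finset.univ.filter (fun j => p (x j))).card := by
  rw [countP_eq_sum_map, List.map_ofFn, List.sum_ofFn, Finset.card_filter]
  simp [Function.comp]
lemma orderStat_le_iff {n : ℕ} (x : Fin n → ℝ) (k : Fin n) (t : ℝ) :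
    orderStat x k ≤ t ↔ (k:ℕ) < (Finset.univ.filter (fun j => x j ≤ t)).card := by
  unfold orderStat
  rw [sorted_getElem_le_iff (List.pairwise_insertionSort _ _)]
  rw [(List.perm_insertionSort (· ≤ ·) (List.ofFn x)).countP_eq]
  rw [countP_ofFn]
  have : (Finset.univ.filter (fun j => decide (x j ≤ t) = true)) =
      (Finset.univ.filter (fun j => x j ≤ t)) := by
    apply Finset.filter_congr; intro j _; simp
  rw [this]

lemma le_orderStat_iff {n : ℕ} (x : Fin n → ℝ) (k : Fin n) (t : ℝ) :
    t ≤ orderStat x k ↔ n - (k:ℕ) ≤ (Finset.univ.filter (fun j => t ≤ x j)).card := by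
  unfold orderStat
  rw [sorted_le_getElem_iff (List.pairwise_insertionSort _ _)]
  rw [(List.perm_insertionSort (· ≤ ·) (List.ofFn x)).countP_eq]
  rw [countP_ofFn]
  rw [List.length_insertionSort, List.length_ofFn]
  have : (Finset.univ.filter (fun j => decide (t ≤ x j) = true)) =
      (Finset.univ.filter (fun j => t ≤ x j)) := by
    apply Finset.filter_congr; intro j _; simp
  rw [this]

lemma orderStat_pos {n : ℕ} (x : Fin n → ℝ) (k : Fin n) (h : ∀ j, 0 < x j) :
    0 < orderStat x k := by
  unfold orderStat
  have hmem : (List.insertionSort (· ≤ ·) (List.ofFn x))[(k:ℕ)]'(by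
      rw [List.length_insertionSort, List.length_ofFn]; exact k.isLt) ∈
      List.insertionSort (· ≤ ·) (List.ofFn x) := List.getElem_mem _
  rw [(List.perm_insertionSort (· ≤ ·) (List.ofFn x)).mem_iff, List.mem_ofFn] at hmem
  obtain ⟨j, hj⟩ := hmem
  rw [← hj]
  exact h j

lemma prob_count_ge {Ω : Type*} [MeasurableSpace Ω] (μ : Measure Ω) [IsProbabilityMeasure μ]
    {n : ℕ} (X : Fin n → Ω → ℝ) (hmeas : ∀ j, Measurable (X j))
    (hindep : iIndepFun X μ)
    (i : ℕ) (q : ℝ → Prop) [DecidablePred q] (hq : MeasurableSet {y | q y}) (p : ℝ≥0∞)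
    (hp : ∀ j, μ (X j ⁻¹' {y | q y}) = p) :
    μ {ω | i ≤ (Finset.univ.filter (fun j => q (X j ω))).card}
      = ∑ S ∈ Finset.univ.powerset.filter (fun S : Finset (Fin n) => i ≤ S.card),
          p ^ S.card * (1-p) ^ (n - S.card) := by
  classical
  set 𝒮 := Finset.univ.powerset.filter (fun S : Finset (Fin n) => i ≤ S.card) with h𝒮
  -- the event as a union
  have hBset : ∀ (S : Finset (Fin n)),
      {ω | Finset.univ.filter (fun j => q (X j ω)) = S}
        = ⋂ j ∈ Finset.univ, X j ⁻¹' (if j ∈ S then {y | q y} else {y | q y}ᶜ) := by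
    intro S
    ext ω
    simp only [Set.mem_setOf_eq, Set.mem_iInter, Set.mem_preimage, Finset.ext_iff,
      Finset.mem_filter, Finset.mem_univ, true_and, true_implies]
    constructor
    · intro h j
      by_cases hj : j ∈ S
      · simp only [hj, if_true, Set.mem_setOf_eq]
        exact (h j).mpr hj
      · simp only [hj, if_false, Set.mem_compl_iff, Set.mem_setOf_eq]
        exact fun hq' => hj ((h j).mp hq')
    · intro h j
      have := h j
      by_cases hj : j ∈ S
      · simp only [hj, if_true, Set.mem_setOf_eq] at this
        simp [hj, this]
      · simp only [hj, if_false, Set.mem_compl_iff, Set.mem_setOf_eq] at this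
        simp [hj, this]
  have hmeasA : ∀ (S : Finset (Fin n)),
      MeasurableSet {ω | Finset.univ.filter (fun j => q (X j ω)) = S} := by
    intro S
    rw [hBset]
    refine MeasurableSet.biInter (Set.to_countable _) (fun j _ => ?_)
    by_cases hj : j ∈ S <;> simp only [hj, if_true, if_false] <;>
      exact (hmeas j) (by first | exact hq | exact hq.compl)
  have hprobA : ∀ S : Finset (Fin n),
      μ {ω | Finset.univ.filter (fun j => q (X j ω)) = S}
        = p ^ S.card * (1-p) ^ (n - S.card) := by
    intro S
    rw [hBset]
    rw [hindep.measure_inter_preimage_eq_mul Finset.univ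
      (sets := fun j => if j ∈ S then {y | q y} else {y | q y}ᶜ)
      (fun j _ => by by_cases hj : j ∈ S <;> simp [hj, hq, hq.compl])]
    have hcompl : ∀ j, μ (X j ⁻¹' {y | q y}ᶜ) = 1 - p := by
      intro j
      rw [Set.preimage_compl, prob_compl_eq_one_sub ((hmeas j) hq), hp j]
    calc ∏ j, μ (X j ⁻¹' (if j ∈ S then {y | q y} else {y | q y}ᶜ))
        = ∏ j, (if j ∈ S then p else 1 - p) := by
          refine Finset.prod_congr rfl (fun j _ => ?_)
          by_cases hj : j ∈ S
          · simp only [hj, if_true]; exact hp j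
          · simp only [hj, if_false]; exact hcompl j
      _ = p ^ S.card * (1-p) ^ (n - S.card) := by
          rw [Finset.prod_ite, Finset.prod_const, Finset.prod_const, Finset.filter_univ_mem]
          have : Finset.univ.filter (fun j => ¬ j ∈ S) = Sᶜ := by
            ext j; simp [Finset.mem_compl]
          rw [this, Finset.card_compl, Fintype.card_fin]
  -- union decomposition
  have hunion : {ω | i ≤ (Finset.univ.filter (fun j => q (X j ω))).card}
      = ⋃ S ∈ 𝒮, {ω | Finset.univ.filter (fun j => q (X j ω)) = S} := by
    ext ω
    simp only [Set.mem_setOf_eq, Set.mem_iUnion, h𝒮, Finset.mem_filter, Finset.mem_powerset]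
    constructor
    · intro h
      exact ⟨Finset.univ.filter (fun j => q (X j ω)), ⟨Finset.filter_subset _ _, h⟩, rfl⟩
    · rintro ⟨S, ⟨-, hcard⟩, rfl⟩
      exact hcard
  rw [hunion, measure_biUnion_finset ?_ (fun S _ => hmeasA S)]
  · exact Finset.sum_congr rfl (fun S _ => hprobA S)
  · intro S hS T hT hST
    refine Set.disjoint_left.mpr (fun ω h1 h2 => hST ?_)
    simp only [Set.mem_setOf_eq] at h1 h2
    rw [← h1, ← h2]

noncomputable def Gpoly (n i : ℕ) (r : ℝ) : ℝ :=
  ∑ k ∈ Finset.Icc i n, (n.choose k : ℝ) * r^k * (1-r)^(n-k)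

lemma sum_powerset_eq_Gpoly (n i : ℕ) (r : ℝ) :
    ∑ S ∈ Finset.univ.powerset.filter (fun S : Finset (Fin n) => i ≤ S.card),
        r ^ S.card * (1-r) ^ (n - S.card) = Gpoly n i r := by
  classical
  rw [Finset.sum_filter, Finset.sum_powerset]
  have h1 : ∀ j ∈ Finset.range (#(Finset.univ : Finset (Fin n)) + 1),
      ∑ t ∈ Finset.powersetCard j (Finset.univ : Finset (Fin n)),
        (if i ≤ #t then r ^ #t * (1-r) ^ (n - #t) else 0)
      = (n.choose j : ℝ) * (if i ≤ j then r ^ j * (1-r) ^ (n - j) else 0) := by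
    intro j _
    rw [Finset.sum_congr rfl (fun t ht => by
      rw [(Finset.mem_powersetCard.1 ht).2]), Finset.sum_const, Finset.card_powersetCard,
      Finset.card_univ, Fintype.card_fin, nsmul_eq_mul]
  rw [Finset.sum_congr rfl h1]
  have h2 : (Finset.range (#(Finset.univ : Finset (Fin n)) + 1)).filter (fun j => i ≤ j)
      = Finset.Icc i n := by
    ext j
    simp [Nat.lt_succ_iff, Finset.card_univ]
    omega
  rw [← Finset.sum_filter_add_sum_filter_not _ (fun j => i ≤ j)]
  have h3 : ∑ j ∈ (Finset.range (#(Finset.univ : Finset (Fin n)) + 1)).filter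
      (fun j => ¬ i ≤ j), (n.choose j : ℝ) * (if i ≤ j then r ^ j * (1-r) ^ (n - j) else 0)
      = 0 := by
    apply Finset.sum_eq_zero
    intro j hj
    simp only [Finset.mem_filter] at hj
    simp [hj.2]
  rw [h3, add_zero, h2]
  unfold Gpoly
  apply Finset.sum_congr rfl
  intro j hj
  simp only [Finset.mem_Icc] at hj
  simp [hj.1, mul_assoc]

-- derivative term
lemma hasDerivAt_Gpoly (n i : ℕ) (hi : 1 ≤ i) (hin : i ≤ n) (r : ℝ) :
    HasDerivAt (Gpoly n i)
      ((n : ℝ) * ((n-1).choose (i-1) : ℝ) * r^(i-1) * (1-r)^(n-1-(i-1))) r := by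
  have key : ∀ k, 1 ≤ k → k ≤ n →
      HasDerivAt (fun r : ℝ => (n.choose k : ℝ) * r^k * (1-r)^(n-k))
        ((n : ℝ) * ((n-1).choose (k-1) : ℝ) * r^(k-1) * (1-r)^(n-1-(k-1))
          - (n : ℝ) * ((n-1).choose k : ℝ) * r^k * (1-r)^(n-1-k)) r := by
    intro k hk1 hkn
    have h1 : HasDerivAt (fun r : ℝ => r^k) ((k:ℝ) * r^(k-1)) r := hasDerivAt_pow k r
    have h2 : HasDerivAt (fun r : ℝ => (1-r)^(n-k))
        (((n-k:ℕ):ℝ) * (1-r)^(n-k-1) * (-1)) r := by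
      have h3 : HasDerivAt (fun r : ℝ => 1 - r) (-1) r := by
        simpa using (hasDerivAt_id' r).const_sub (1:ℝ)
      exact (hasDerivAt_pow (n-k) (1-r)).comp r h3
    have h4 := ((h1.const_mul ((n.choose k : ℝ))).fun_mul h2)
    refine h4.congr_deriv (Eq.symm ?_)
    have e1 : ((n.choose k : ℕ) : ℝ) * (k : ℝ) = (n : ℝ) * (((n-1).choose (k-1) : ℕ) : ℝ) := by
      rw [← Nat.cast_mul, ← Nat.cast_mul]
      congr 1
      have := Nat.add_one_mul_choose_eq (n-1) (k-1)
      have hn' : n - 1 + 1 = n := by omega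
      have hk' : k - 1 + 1 = k := by omega
      rw [hn', hk'] at this
      omega
    have e2 : ((n.choose k : ℕ) : ℝ) * ((n - k : ℕ) : ℝ)
        = (n : ℝ) * (((n-1).choose k : ℕ) : ℝ) := by
      rw [← Nat.cast_mul, ← Nat.cast_mul]
      congr 1
      rcases Nat.lt_or_ge k n with hlt | hge
      · have h5 := Nat.add_one_mul_choose_eq (n-1) (n-k-1)
        have e3 : n - 1 + 1 = n := by omega
        have e4 : n - k - 1 + 1 = n - k := by omega
        rw [e3, e4] at h5
        have e5 : (n-1).choose (n-k-1) = (n-1).choose k := by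
          have h6 := Nat.choose_symm (show k ≤ n-1 by omega)
          have e6 : n - 1 - k = n - k - 1 := by omega
          rw [e6] at h6
          exact h6
        have e7 : n.choose (n-k) = n.choose k := Nat.choose_symm (by omega)
        rw [e5, e7] at h5
        omega
      · have hkn' : k = n := by omega
        subst hkn'
        simp [Nat.choose_eq_zero_of_lt (show k - 1 < k by omega)]
    have hnk : n - 1 - (k-1) = n - k := by omega
    have hnk2 : n - k - 1 = n - 1 - k := by omega
    rw [hnk, hnk2]
    linear_combination (r^k * (1-r)^(n-1-k)) * e2 - (r^(k-1) * (1-r)^(n-k)) * e1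
  -- sum of derivatives
  have hsum : HasDerivAt (Gpoly n i)
      (∑ k ∈ Finset.Icc i n,
        ((n : ℝ) * ((n-1).choose (k-1) : ℝ) * r^(k-1) * (1-r)^(n-1-(k-1))
          - (n : ℝ) * ((n-1).choose k : ℝ) * r^k * (1-r)^(n-1-k))) r := by
    apply HasDerivAt.fun_sum
    intro k hk
    simp only [Finset.mem_Icc] at hk
    exact key k (by omega) hk.2
  convert hsum using 1
  set b : ℕ → ℝ := fun k => (n : ℝ) * ((n-1).choose k : ℝ) * r^k * (1-r)^(n-1-k) with hb
  have step1 : ∑ k ∈ Finset.Icc i n,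
      ((n : ℝ) * ((n-1).choose (k-1) : ℝ) * r^(k-1) * (1-r)^(n-1-(k-1))
        - (n : ℝ) * ((n-1).choose k : ℝ) * r^k * (1-r)^(n-1-k))
      = ∑ j ∈ Finset.range (n + 1 - i), (b (i-1+j) - b (i-1+(j+1))) := by
    rw [← Finset.Ico_add_one_right_eq_Icc, Finset.sum_Ico_eq_sum_range]
    have erange : n + 1 - i = n + 1 - i := rfl
    apply Finset.sum_congr rfl
    intro j _
    have e1 : i + j - 1 = i - 1 + j := by omega
    have e2 : i + j = i - 1 + (j + 1) := by omega
    simp only [hb, e1, ← e2]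
  rw [step1, Finset.sum_range_sub' (fun j => b (i-1+j))]
  have e3 : i - 1 + (n + 1 - i) = n := by omega
  have e4 : b n = 0 := by
    simp [hb, Nat.choose_eq_zero_of_lt (show n - 1 < n by omega)]
  rw [e3, e4, sub_zero]
  simp [hb]

lemma Gpoly_strictMonoOn (n i : ℕ) (hi : 1 ≤ i) (hin : i ≤ n) :
    StrictMonoOn (Gpoly n i) (Set.Icc 0 1) := by
  apply strictMonoOn_of_deriv_pos (convex_Icc 0 1)
  · apply Continuous.continuousOn
    apply continuous_finset_sum
    intro k _
    exact (continuous_const.mul (continuous_pow k)).mul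
      ((continuous_const.sub continuous_id).pow (n-k))
  · intro r hr
    rw [interior_Icc] at hr
    rw [(hasDerivAt_Gpoly n i hi hin r).deriv]
    have h1 : (0:ℝ) < n := by
      have : 1 ≤ n := le_trans hi hin
      exact_mod_cast Nat.lt_of_lt_of_le Nat.zero_lt_one this
    have h2 : (0:ℝ) < ((n-1).choose (i-1) : ℝ) := by
      exact_mod_cast Nat.choose_pos (show i - 1 ≤ n - 1 by omega)
    exact mul_pos (mul_pos (mul_pos h1 h2) (pow_pos hr.1 _))
      (pow_pos (by have := hr.2; linarith) _)

lemma measurableSet_count_ge {Ω : Type*} [MeasurableSpace Ω]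
    {n : ℕ} (X : Fin n → Ω → ℝ) (hmeas : ∀ j, Measurable (X j))
    (i : ℕ) (q : ℝ → Prop) [DecidablePred q] (hq : MeasurableSet {y | q y}) :
    MeasurableSet {ω | i ≤ (Finset.univ.filter (fun j => q (X j ω))).card} := by
  have hcnt : Measurable (fun ω => (Finset.univ.filter (fun j => q (X j ω))).card) := by
    simp only [Finset.card_filter]
    apply Finset.measurable_sum
    intro j _
    exact Measurable.ite ((hmeas j) hq) measurable_const measurable_const
  exact hcnt (measurableSet_Ici (a := i))

lemma atom_zero {Ω : Type*} [MeasurableSpace Ω] (μ : Measure Ω) [IsProbabilityMeasure μ]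
    (X0 : Ω → ℝ) (hX0 : Measurable X0) (F : ℝ → ℝ)
    (hF : ∀ x, F x = (μ {ω | X0 ω ≤ x}).toReal) (hFcont : Continuous F) (y : ℝ) :
    μ (X0 ⁻¹' {y}) = 0 := by
  by_contra h
  have hpos : 0 < (μ (X0 ⁻¹' {y})).toReal :=
    ENNReal.toReal_pos h (measure_ne_top μ _)
  set a := (μ (X0 ⁻¹' {y})).toReal with ha
  have key : ∀ z, z < y → a ≤ F y - F z := by
    intro z hz
    have hsub : X0 ⁻¹' {y} ⊆ X0 ⁻¹' (Set.Iic y) \ X0 ⁻¹' (Set.Iic z) := by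
      intro ω hω
      simp only [Set.mem_preimage, Set.mem_singleton_iff] at hω
      constructor
      · simp [Set.mem_preimage, hω]
      · simp [Set.mem_preimage, hω]
        linarith
    have hmono := measure_mono (μ := μ) hsub
    have hdiff : μ (X0 ⁻¹' (Set.Iic y) \ X0 ⁻¹' (Set.Iic z))
        = μ (X0 ⁻¹' (Set.Iic y)) - μ (X0 ⁻¹' (Set.Iic z)) := by
      apply measure_diff
      · intro ω hω
        simp only [Set.mem_preimage, Set.mem_Iic] at hω ⊢
        linarith
      · exact (hX0 measurableSet_Iic).nullMeasurableSet
      · exact measure_ne_top μ _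
    rw [hdiff] at hmono
    have hne : μ (X0 ⁻¹' (Set.Iic y)) - μ (X0 ⁻¹' (Set.Iic z)) ≠ ⊤ :=
      (lt_of_le_of_lt tsub_le_self (measure_lt_top μ _)).ne
    have := ENNReal.toReal_mono hne hmono
    rw [ENNReal.toReal_sub_of_le (measure_mono (by
      intro ω hω
      simp only [Set.mem_preimage, Set.mem_Iic] at hω ⊢
      linarith)) (measure_ne_top μ _)] at this
    have hFy : F y = (μ (X0 ⁻¹' (Set.Iic y))).toReal := hF y
    have hFz : F z = (μ (X0 ⁻¹' (Set.Iic z))).toReal := hF z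
    rw [← hFy, ← hFz] at this
    exact this
  have hcont := (hFcont.continuousAt (x := y))
  rw [Metric.continuousAt_iff] at hcont
  obtain ⟨δ, hδ, hδ'⟩ := hcont a hpos
  have h1 := key (y - δ/2) (by linarith)
  have h2 := hδ' (x := y - δ/2) (by
    simp only [Real.dist_eq]
    rw [abs_of_nonpos (by linarith)]
    linarith)
  rw [Real.dist_eq, abs_sub_comm, abs_of_nonneg (by linarith)] at h2
  linarith

lemma prob_Ici_toReal {Ω : Type*} [MeasurableSpace Ω] (μ : Measure Ω) [IsProbabilityMeasure μ]
    (X0 : Ω → ℝ) (hX0 : Measurable X0) (F : ℝ → ℝ)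
    (hF : ∀ x, F x = (μ {ω | X0 ω ≤ x}).toReal) (hFcont : Continuous F) (y : ℝ) :
    (μ (X0 ⁻¹' Set.Ici y)).toReal = 1 - F y := by
  have hio : μ (X0 ⁻¹' Set.Iio y) = μ (X0 ⁻¹' Set.Iic y) := by
    have hunion : X0 ⁻¹' Set.Iic y = X0 ⁻¹' Set.Iio y ∪ X0 ⁻¹' {y} := by
      rw [← Set.preimage_union]
      congr 1
      ext t
      simp [le_iff_lt_or_eq]
    have h0 := atom_zero μ X0 hX0 F hF hFcont y
    rw [hunion]
    apply le_antisymm (measure_mono Set.subset_union_left)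
    exact (measure_union_le _ _).trans (by rw [h0, add_zero])
  have hcompl : X0 ⁻¹' Set.Ici y = (X0 ⁻¹' Set.Iio y)ᶜ := by
    rw [← Set.preimage_compl]
    congr 1
    ext t
    simp
  rw [hcompl, prob_compl_eq_one_sub (hX0 measurableSet_Iio), hio,
    ENNReal.toReal_sub_of_le prob_le_one ENNReal.one_ne_top, ENNReal.toReal_one, hF y]
  rfl

lemma toReal_sum_eq_Gpoly (n i : ℕ) (p : ℝ≥0∞) (hple : p ≤ 1) :
    (∑ S ∈ Finset.univ.powerset.filter (fun S : Finset (Fin n) => i ≤ S.card),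
        p ^ S.card * (1-p) ^ (n - S.card)).toReal = Gpoly n i p.toReal := by
  have hpt : p ≠ ⊤ := (lt_of_le_of_lt hple ENNReal.one_lt_top).ne
  have h1pt : (1 : ℝ≥0∞) - p ≠ ⊤ := (lt_of_le_of_lt tsub_le_self ENNReal.one_lt_top).ne
  rw [ENNReal.toReal_sum (fun S _ => ENNReal.mul_ne_top
    (ENNReal.pow_ne_top hpt) (ENNReal.pow_ne_top h1pt))]
  rw [← sum_powerset_eq_Gpoly]
  apply Finset.sum_congr rfl
  intro S _
  rw [ENNReal.toReal_mul, ENNReal.toReal_pow, ENNReal.toReal_pow,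
    ENNReal.toReal_sub_of_le hple ENNReal.one_ne_top, ENNReal.toReal_one]

/-- For i.i.d. positive random variables `X_1, …, X_n` (`n > 1`) with common
continuous distribution function `F`, if for some `1 ≤ i ≤ n/2` the order statistic `X_(i)`
and `1 / X_(n−i+1)` are identically distributed, then `F` is log-symmetric. -/
theorem logSymmetric_of_orderStat_identDistrib
    {Ω : Type*} [MeasurableSpace Ω] (μ : Measure Ω) [IsProbabilityMeasure μ]
    (n : ℕ) (hn : 1 < n) (i : ℕ) (hi1 : 1 ≤ i) (hi2 : 2 * i ≤ n)
    (X : Fin n → Ω → ℝ)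
    (hmeas : ∀ j, Measurable (X j))
    (hpos : ∀ j ω, 0 < X j ω)
    (hindep : iIndepFun X μ)
    (hid : ∀ j, Measure.map (X j) μ = Measure.map (X ⟨0, by omega⟩) μ)
    (F : ℝ → ℝ)
    (hF : ∀ x, F x = (μ {ω | X ⟨0, by omega⟩ ω ≤ x}).toReal)
    (hFcont : Continuous F)
    (hdist : Measure.map (fun ω => orderStat (fun j => X j ω) ⟨i - 1, by omega⟩) μ
      = Measure.map (fun ω => (orderStat (fun j => X j ω) ⟨n - i, by omega⟩)⁻¹) μ) :
    ∀ x > 0, F x = 1 - F x⁻¹ := by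
  intro x hx
  have h0n : (0:ℕ) < n := by omega
  have hin : i ≤ n := by omega
  -- preimage set identifications
  have hsetL : ∀ t : ℝ,
      (fun ω => orderStat (fun j => X j ω) ⟨i - 1, by omega⟩) ⁻¹' Set.Iic t
        = {ω | i ≤ (Finset.univ.filter (fun j => X j ω ≤ t)).card} := by
    intro t
    ext ω
    simp only [Set.mem_preimage, Set.mem_Iic, Set.mem_setOf_eq]
    rw [orderStat_le_iff]
    have e : ((⟨i - 1, by omega⟩ : Fin n) : ℕ) = i - 1 := rfl
    rw [e]
    omega
  have hsetR : ∀ t : ℝ, 0 < t →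
      (fun ω => (orderStat (fun j => X j ω) ⟨n - i, by omega⟩)⁻¹) ⁻¹' Set.Iic t
        = {ω | i ≤ (Finset.univ.filter (fun j => t⁻¹ ≤ X j ω)).card} := by
    intro t ht
    ext ω
    simp only [Set.mem_preimage, Set.mem_Iic, Set.mem_setOf_eq]
    have hos : 0 < orderStat (fun j => X j ω) ⟨n - i, by omega⟩ :=
      orderStat_pos _ _ (fun j => hpos j ω)
    rw [inv_le_comm₀ hos ht, le_orderStat_iff]
    have e : ((⟨n - i, by omega⟩ : Fin n) : ℕ) = n - i := rfl
    rw [e]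
    have e2 : n - (n - i) = i := by omega
    rw [e2]
  -- measurability
  have hf : Measurable (fun ω => orderStat (fun j => X j ω) ⟨i - 1, by omega⟩) := by
    apply measurable_of_Iic
    intro t
    rw [hsetL t]
    exact measurableSet_count_ge X hmeas i (fun y => y ≤ t) measurableSet_Iic
  have hg : Measurable (fun ω => (orderStat (fun j => X j ω) ⟨n - i, by omega⟩)⁻¹) := by
    apply measurable_of_Iic
    intro t
    by_cases ht : 0 < t
    · rw [hsetR t ht]
      exact measurableSet_count_ge X hmeas i (fun y => t⁻¹ ≤ y) measurableSet_Ici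
    · have : (fun ω => (orderStat (fun j => X j ω) ⟨n - i, by omega⟩)⁻¹) ⁻¹' Set.Iic t
          = ∅ := by
        ext ω
        simp only [Set.mem_preimage, Set.mem_Iic, Set.mem_empty_iff_false, iff_false, not_le]
        have hos : 0 < orderStat (fun j => X j ω) ⟨n - i, by omega⟩ :=
          orderStat_pos _ _ (fun j => hpos j ω)
        have := inv_pos.mpr hos
        push_neg at ht
        linarith
      rw [this]
      exact MeasurableSet.empty
  -- common marginal
  have hps : ∀ (B : Set ℝ), MeasurableSet B → ∀ j,
      μ (X j ⁻¹' B) = μ (X ⟨0, by omega⟩ ⁻¹' B) := by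
    intro B hB j
    rw [← Measure.map_apply (hmeas j) hB, hid j, Measure.map_apply (hmeas _) hB]
  set p : ℝ≥0∞ := μ (X ⟨0, by omega⟩ ⁻¹' Set.Iic x) with hp
  set q : ℝ≥0∞ := μ (X ⟨0, by omega⟩ ⁻¹' Set.Ici x⁻¹) with hq
  -- the two probabilities
  have hL : μ ((fun ω => orderStat (fun j => X j ω) ⟨i - 1, by omega⟩) ⁻¹' Set.Iic x)
      = ∑ S ∈ Finset.univ.powerset.filter (fun S : Finset (Fin n) => i ≤ S.card),
          p ^ S.card * (1-p) ^ (n - S.card) := by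
    rw [hsetL x]
    exact prob_count_ge μ X hmeas hindep i (fun y => y ≤ x) measurableSet_Iic p
      (fun j => hps (Set.Iic x) measurableSet_Iic j)
  have hR : μ ((fun ω => (orderStat (fun j => X j ω) ⟨n - i, by omega⟩)⁻¹) ⁻¹' Set.Iic x)
      = ∑ S ∈ Finset.univ.powerset.filter (fun S : Finset (Fin n) => i ≤ S.card),
          q ^ S.card * (1-q) ^ (n - S.card) := by
    rw [hsetR x hx]
    exact prob_count_ge μ X hmeas hindep i (fun y => x⁻¹ ≤ y) measurableSet_Ici q
      (fun j => hps (Set.Ici x⁻¹) measurableSet_Ici j)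
  -- apply the distributional identity
  have heq := congrArg (fun m : Measure ℝ => m (Set.Iic x)) hdist
  rw [Measure.map_apply hf measurableSet_Iic, Measure.map_apply hg measurableSet_Iic,
    hL, hR] at heq
  -- pass to real numbers
  have hGeq : Gpoly n i p.toReal = Gpoly n i q.toReal := by
    rw [← toReal_sum_eq_Gpoly n i p prob_le_one, ← toReal_sum_eq_Gpoly n i q prob_le_one,
      heq]
  have hpF : p.toReal = F x := (hF x).symm
  have hqF : q.toReal = 1 - F x⁻¹ :=
    prob_Ici_toReal μ (X ⟨0, by omega⟩) (hmeas _) F hF hFcont x⁻¹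
  rw [hpF, hqF] at hGeq
  -- conclude by strict monotonicity
  have hFx01 : ∀ t : ℝ, F t ∈ Set.Icc (0:ℝ) 1 := by
    intro t
    rw [hF t]
    constructor
    · exact ENNReal.toReal_nonneg
    · calc (μ {ω | X ⟨0, by omega⟩ ω ≤ t}).toReal
          ≤ (1 : ℝ≥0∞).toReal := ENNReal.toReal_mono ENNReal.one_ne_top prob_le_one
        _ = 1 := ENNReal.toReal_one
  have hmem1 : F x ∈ Set.Icc (0:ℝ) 1 := hFx01 x
  have hmem2 : (1 - F x⁻¹) ∈ Set.Icc (0:ℝ) 1 := by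
    have := hFx01 x⁻¹
    constructor
    · linarith [this.2]
    · linarith [this.1]
  exact (Gpoly_strictMonoOn n i hi1 hin).injOn hmem1 hmem2 hGeq
end
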